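/- arXiv:2210.01195 — 2 statements merged into one kernel-verified Lean document; each statement's English description precedes it below -/
import Mathlib

section
/- For all real z with |z| < 1, the limit as α → 0⁺ of E_{α,1}(-z²) equals 1/(1+z²). -/
noncomputable def mittagLeffler (α β : ℝ) (z : ℂ) : ℂ :=
  ∑' n : ℕ, z ^ n / (Real.Gamma (α * n + β) : ℂ)

lemma gamma_half_le {x : ℝ} (hx : 1 ≤ x) : (1/2 : ℝ) ≤ Real.Gamma x := by
  rcases le_or_gt 2 x with h | h
  · have : Real.Gamma 2 ≤ Real.Gamma x :=
      Real.Gamma_strictMonoOn_Ici.monotoneOn (by norm_num) h h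
    rw [Real.Gamma_two] at this
    linarith
  · have hx0 : x ≠ 0 := by linarith
    have h1 : Real.Gamma (x + 1) = x * Real.Gamma x := Real.Gamma_add_one hx0
    have h2 : (1 : ℝ) ≤ Real.Gamma (x + 1) := by
      have : Real.Gamma 2 ≤ Real.Gamma (x + 1) :=
        Real.Gamma_strictMonoOn_Ici.monotoneOn (by norm_num)
          (by simp only [Set.mem_Ici]; linarith) (by linarith)
      rwa [Real.Gamma_two] at this
    nlinarith [Real.Gamma_pos_of_pos (by linarith : (0:ℝ) < x)]

theorem mittagLeffler_alpha_to_zero (z : ℝ) (hz : |z| < 1) :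
    Filter.Tendsto (fun α : ℝ => mittagLeffler α 1 (-(z ^ 2) : ℂ))
      (nhdsWithin 0 (Set.Ioi 0)) (nhds ((1 / (1 + z ^ 2) : ℝ) : ℂ)) := by
  have hz2 : z ^ 2 < 1 := by nlinarith [sq_abs z, abs_nonneg z]
  have hz2' : (0:ℝ) ≤ z ^ 2 := sq_nonneg z
  have hlim : ((1 / (1 + z ^ 2) : ℝ) : ℂ) = ∑' n : ℕ, (-(z ^ 2) : ℂ) ^ n := by
    rw [tsum_geometric_of_norm_lt_one (by
      rw [norm_neg]
      simpa [Complex.norm_real, abs_of_nonneg hz2'] using hz2 : ‖(-(z ^ 2) : ℂ)‖ < 1)]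
    rw [sub_neg_eq_add]
    push_cast
    rw [one_div]
  rw [hlim]
  unfold mittagLeffler
  apply tendsto_tsum_of_dominated_convergence (bound := fun n : ℕ => 2 * (z ^ 2) ^ n)
  · exact (summable_geometric_of_lt_one hz2' hz2).mul_left 2
  · intro k
    have hΓ : Filter.Tendsto (fun α : ℝ => ((Real.Gamma (α * k + 1) : ℝ) : ℂ))
        (nhdsWithin 0 (Set.Ioi 0)) (nhds 1) := by
      have hcont : ContinuousAt Real.Gamma 1 :=
        (Real.differentiableAt_Gamma (fun m => by
          intro h
          have h2 : (0:ℝ) ≤ (m:ℝ) := m.cast_nonneg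
          linarith [h])).continuousAt
      have harg : Filter.Tendsto (fun α : ℝ => α * k + 1) (nhds 0) (nhds 1) := by
        have hc : Continuous (fun α : ℝ => α * k + 1) := by continuity
        simpa using hc.tendsto (0:ℝ)
      have : Filter.Tendsto (fun α : ℝ => Real.Gamma (α * k + 1)) (nhds 0) (nhds 1) := by
        have := hcont.tendsto.comp harg
        simpa [Real.Gamma_one, Function.comp_def] using this
      have := (Complex.continuous_ofReal.tendsto 1).comp (this.mono_left (nhdsWithin_le_nhds (s := Set.Ioi 0)))
      simpa [Function.comp_def] using this
    have := Filter.Tendsto.div (tendsto_const_nhds : Filter.Tendsto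
        (fun _ : ℝ => (-(z ^ 2) : ℂ) ^ k) _ _) hΓ one_ne_zero
    simpa [Pi.div_def] using this
  · filter_upwards [self_mem_nhdsWithin] with α (hα : α ∈ Set.Ioi 0)
    intro k
    have hα' : (0:ℝ) < α := hα
    have h1 : (1:ℝ) ≤ α * k + 1 := by
      have := mul_nonneg hα'.le (Nat.cast_nonneg k : (0:ℝ) ≤ (k:ℝ))
      linarith
    have hG := gamma_half_le h1
    have hGpos : (0:ℝ) < Real.Gamma (α * k + 1) := lt_of_lt_of_le (by norm_num) hG
    have hnorm : ‖(-(z ^ 2) : ℂ) ^ k / (Real.Gamma (α * k + 1) : ℂ)‖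
        = (z ^ 2) ^ k / Real.Gamma (α * k + 1) := by
      rw [norm_div, norm_pow, norm_neg]
      simp [Complex.norm_real, abs_of_nonneg hz2', abs_of_pos hGpos]
    rw [hnorm, div_le_iff₀ hGpos]
    have hk : (0:ℝ) ≤ (z ^ 2) ^ k := pow_nonneg hz2' k
    nlinarith
end

section
/- For 0 < α ≤ 1 and x ≥ 0, 0 ≤ E_{α,1}(-x) ≤ 1, with E_{α,1}(0) = 1. -/
open Filter Finset Real Nat Topology

namespace MLAux

/-- rising factorial `x (x+1) ⋯ (x+n-1)` -/
noncomputable def P (n : ℕ) (x : ℝ) : ℝ := ∏ k ∈ Finset.range n, (x + k)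

lemma P_zero (x : ℝ) : P 0 x = 1 := by simp [P]

lemma P_succ (n : ℕ) (x : ℝ) : P (n+1) x = P n x * (x + n) := by
  simp [P, Finset.prod_range_succ]

lemma P_succ' (n : ℕ) (x : ℝ) : P (n+1) x = x * P n (x+1) := by
  rw [P, Finset.prod_range_succ']
  simp only [Nat.cast_zero, add_zero, mul_comm]
  congr 1
  apply Finset.prod_congr rfl
  intro k _
  push_cast
  ring

lemma P_nonneg {x : ℝ} (h : 0 ≤ x) (n : ℕ) : 0 ≤ P n x :=
  Finset.prod_nonneg fun k _ => by positivity

lemma P_pos {x : ℝ} (h : 0 < x) (n : ℕ) : 0 < P n x :=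
  Finset.prod_pos fun k _ => by positivity

lemma P_le {x : ℝ} (h : 0 ≤ x) (n : ℕ) : P n x ≤ (x + 1) ^ n * n ! := by
  have h1 : ((x+1))^n * (n ! : ℝ) = ∏ k ∈ Finset.range n, ((x+1) * ((k : ℝ)+1)) := by
    rw [Finset.prod_mul_distrib, Finset.prod_const, Finset.card_range]
    congr 1
    rw [← Finset.prod_range_add_one_eq_factorial n, Nat.cast_prod]
    push_cast
    rfl
  rw [h1]
  apply Finset.prod_le_prod
  · intro k _; positivity
  · intro k _
    have hk : (0:ℝ) ≤ (k:ℝ) := by positivity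
    nlinarith

lemma vandermonde (m : ℕ) (x y : ℝ) :
    P m (x + y) = ∑ n ∈ Finset.range (m+1), (m.choose n : ℝ) * P n x * P (m - n) y := by
  induction m with
  | zero => simp [P]
  | succ m ih =>
    have key : ∀ n ∈ Finset.range (m+1),
        (m.choose n : ℝ) * P n x * P (m - n) y * (x + y + m)
        = (m.choose n : ℝ) * (P (n+1) x * P (m-n) y)
          + (m.choose n : ℝ) * (P n x * P (m-n+1) y) := by
      intro n hn
      rw [Finset.mem_range, Nat.lt_succ_iff] at hn
      have hn' : ((m - n : ℕ) : ℝ) = (m:ℝ) - (n:ℝ) := by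
        push_cast [Nat.cast_sub hn]; ring
      rw [P_succ, P_succ, hn']
      ring
    have lhs_eq : P (m+1) (x+y) = ∑ n ∈ Finset.range (m+1),
        ((m.choose n : ℝ) * (P (n+1) x * P (m-n) y)
          + (m.choose n : ℝ) * (P n x * P (m-n+1) y)) := by
      rw [P_succ, ih, Finset.sum_mul, Finset.sum_congr rfl key]
    rw [lhs_eq, Finset.sum_add_distrib]
    -- now handle target
    rw [Finset.sum_range_succ' (fun n => ((m+1).choose n : ℝ) * P n x * P (m+1 - n) y) (m+1)]
    have pascal : ∀ k, ((m+1).choose (k+1) : ℝ) = (m.choose k : ℝ) + (m.choose (k+1) : ℝ) := by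
      intro k
      rw [Nat.choose_succ_succ]
      push_cast
      ring
    have congr1 : ∀ k ∈ Finset.range (m+1),
        ((m+1).choose (k+1) : ℝ) * P (k+1) x * P (m+1-(k+1)) y
        = (m.choose k : ℝ) * (P (k+1) x * P (m-k) y)
          + (m.choose (k+1) : ℝ) * (P (k+1) x * P (m-k) y) := by
      intro k _
      have : m + 1 - (k+1) = m - k := by omega
      rw [this, pascal]
      ring
    rw [Finset.sum_congr rfl congr1, Finset.sum_add_distrib]
    have e2 : ∑ n ∈ Finset.range (m+2), (m.choose n : ℝ) * (P n x * P (m+1-n) y)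
        = ∑ k ∈ Finset.range (m+1), (m.choose (k+1) : ℝ) * (P (k+1) x * P (m+1-(k+1)) y)
          + (m.choose 0 : ℝ) * (P 0 x * P (m+1-0) y) :=
      Finset.sum_range_succ' (fun n => (m.choose n : ℝ) * (P n x * P (m+1-n) y)) (m+1)
    have e3 : ∑ n ∈ Finset.range (m+2), (m.choose n : ℝ) * (P n x * P (m+1-n) y)
        = ∑ n ∈ Finset.range (m+1), (m.choose n : ℝ) * (P n x * P (m-n+1) y) := by
      rw [Finset.sum_range_succ]
      simp only [Nat.choose_succ_self, Nat.cast_zero, zero_mul, add_zero]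
      apply Finset.sum_congr rfl
      intro n hn
      rw [Finset.mem_range, Nat.lt_succ_iff] at hn
      have : m + 1 - n = m - n + 1 := by omega
      rw [this]
    have e4 : ∑ k ∈ Finset.range (m+1), (m.choose (k+1) : ℝ) * (P (k+1) x * P (m+1-(k+1)) y)
        = ∑ n ∈ Finset.range (m+1), (m.choose n : ℝ) * (P n x * P (m-n+1) y)
          - (m.choose 0 : ℝ) * (P 0 x * P (m+1-0) y) := by
      rw [← e3, e2]; ring
    have e5 : ∀ k ∈ Finset.range (m+1),
        (m.choose (k+1) : ℝ) * (P (k+1) x * P (m+1-(k+1)) y)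
        = (m.choose (k+1) : ℝ) * (P (k+1) x * P (m-k) y) := by
      intro k _
      have : m + 1 - (k+1) = m - k := by omega
      rw [this]
    rw [Finset.sum_congr rfl e5] at e4
    rw [e4]
    simp [P_zero]
    ring

noncomputable def Bf (N : ℕ) (s : ℝ) : ℝ := P N (s+1) / N !

noncomputable def Af (α : ℝ) (n : ℕ) : ℝ := P n (-α) / n !

lemma Bf_nonneg {s : ℝ} (hs : -1 ≤ s) (N : ℕ) : 0 ≤ Bf N s := by
  have := P_nonneg (x := s + 1) (by linarith) N
  have : (0:ℝ) < N ! := by positivity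
  unfold Bf; positivity

lemma Af_zero (α : ℝ) : Af α 0 = 1 := by simp [Af, P_zero]

lemma Af_succ_nonpos {α : ℝ} (hα : 0 ≤ α) (hα1 : α ≤ 1) (n : ℕ) : Af α (n+1) ≤ 0 := by
  have h1 : P (n+1) (-α) = -α * P n (1-α) := by
    rw [P_succ']
    congr 1
    ring_nf
  have h2 : 0 ≤ P n (1-α) := P_nonneg (by linarith) n
  have h3 : (0:ℝ) < (n+1)! := by positivity
  unfold Af
  rw [h1]
  apply div_nonpos_of_nonpos_of_nonneg _ (le_of_lt h3)
  nlinarith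

lemma convV (α s : ℝ) (m : ℕ) :
    ∑ n ∈ Finset.range (m+1), Af α n * Bf (m-n) s = Bf m (s - α) := by
  have hv := vandermonde m (-α) (s+1)
  have h1 : Bf m (s - α) = P m (-α + (s+1)) / m ! := by
    unfold Bf
    congr 2
    ring
  rw [h1, hv, Finset.sum_div]
  apply Finset.sum_congr rfl
  intro n hn
  rw [Finset.mem_range, Nat.lt_succ_iff] at hn
  unfold Af Bf
  have hfact : ((m.choose n : ℝ)) * (n ! : ℝ) * (((m-n) ! : ℝ)) = (m ! : ℝ) := by
    rw [← Nat.cast_mul, ← Nat.cast_mul, Nat.choose_mul_factorial_mul_factorial hn]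
  have h2 : (0:ℝ) < n ! := by positivity
  have h3 : (0:ℝ) < (m-n)! := by positivity
  have h4 : (0:ℝ) < m ! := by positivity
  field_simp
  linear_combination (-(P n (-α) * P (m - n) (s + 1))) * hfact

lemma Af_sum (α : ℝ) (N : ℕ) : ∑ n ∈ Finset.range (N+1), Af α n = Bf N (-α) := by
  induction N with
  | zero => simp [Af_zero, Bf, P_zero]
  | succ N ih =>
    rw [Finset.sum_range_succ, ih]
    unfold Af Bf
    have h1 : P (N+1) (-α + 1) = P N (-α+1) * (-α + 1 + N) := P_succ N _
    have h2 : P (N+1) (-α) = -α * P N (-α+1) := by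
      rw [P_succ']
    have h3 : ((N+1)! : ℝ) = (N+1) * N ! := by
      rw [Nat.factorial_succ]; push_cast; ring
    rw [h1, h2, h3]
    have h4 : (0:ℝ) < N ! := by positivity
    have h5 : (0:ℝ) < (N:ℝ) + 1 := by positivity
    field_simp
    ring
lemma summable_poly_geom (N : ℕ) {w : ℝ} (hw0 : 0 < w) (hw : w < 1) :
    Summable (fun j : ℕ => ((j:ℝ)+2)^N * w^j) := by
  have h0 : Summable (fun n : ℕ => (n:ℝ)^N * w^n) := by
    apply summable_pow_mul_geometric_of_norm_lt_one
    rw [Real.norm_eq_abs, abs_of_pos hw0]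
    exact hw
  have h1 : Summable (fun j : ℕ => ((j+2:ℕ):ℝ)^N * w^(j+2)) :=
    ((_root_.summable_nat_add_iff 2).2 h0)
  have h2 := h1.mul_right (w⁻¹ * w⁻¹)
  apply h2.congr
  intro j
  push_cast
  field_simp
  ring

lemma norm_term_le {α c w : ℝ} (hα : 0 < α) (hα1 : α ≤ 1) (hc : -1 ≤ c) (hc0 : c ≤ 0)
    (hw0 : 0 < w) (N : ℕ) (j : ℕ) :
    ‖(-w)^j * Bf N (α*j + c)‖ ≤ ((j:ℝ)+2)^N * w^j := by
  have hj : (0:ℝ) ≤ (j:ℝ) := by positivity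
  have hs1 : 0 ≤ α*j + c + 1 := by nlinarith
  have hBnn : 0 ≤ Bf N (α*j + c) := Bf_nonneg (by linarith) N
  rw [norm_mul, norm_pow, norm_neg, Real.norm_eq_abs, Real.norm_eq_abs,
    abs_of_pos hw0, abs_of_nonneg hBnn, mul_comm]
  apply mul_le_mul_of_nonneg_right _ (by positivity)
  -- Bf N (α j + c) ≤ (j+2)^N
  have hP := P_le (x := α*j + c + 1) hs1 N
  have hNf : (0:ℝ) < N ! := by positivity
  unfold Bf
  rw [div_le_iff₀ hNf]
  refine hP.trans ?_
  apply mul_le_mul_of_nonneg_right _ (le_of_lt hNf)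
  apply pow_le_pow_left₀ (by linarith)
  nlinarith

lemma summable_term {α c w : ℝ} (hα : 0 < α) (hα1 : α ≤ 1) (hc : -1 ≤ c) (hc0 : c ≤ 0)
    (hw0 : 0 < w) (hw : w < 1) (N : ℕ) :
    Summable (fun j : ℕ => (-w)^j * Bf N (α*j + c)) :=
  Summable.of_norm_bounded (summable_poly_geom N hw0 hw)
    (norm_term_le hα hα1 hc hc0 hw0 N)

lemma summable_term0 {α w : ℝ} (hα : 0 < α) (hα1 : α ≤ 1)
    (hw0 : 0 < w) (hw : w < 1) (N : ℕ) :
    Summable (fun j : ℕ => (-w)^j * Bf N (α*j)) := by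
  have := summable_term (c := 0) hα hα1 (by norm_num) (le_refl 0) hw0 hw N
  simpa using this

noncomputable def Sf (α w : ℝ) (N : ℕ) : ℝ := ∑' j : ℕ, (-w)^j * Bf N (α * j)

lemma Sf_rec {α w : ℝ} (hα : 0 < α) (hα1 : α ≤ 1) (hw0 : 0 < w) (hw : w < 1) (N : ℕ) :
    (1 + w) * Sf α w N
      = Bf N (-α) - ∑ i ∈ Finset.range N, Af α (i+1) * Sf α w (N-(i+1)) := by
  have h1 : ∑ n ∈ Finset.range (N+1), Af α n * Sf α w (N-n)
      = ∑' j : ℕ, (-w)^j * Bf N (α*j - α) := by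
    have e1 : ∀ n ∈ Finset.range (N+1), Af α n * Sf α w (N-n)
        = ∑' j : ℕ, Af α n * ((-w)^j * Bf (N-n) (α*j)) := by
      intro n _
      rw [Sf, ← tsum_mul_left]
    rw [Finset.sum_congr rfl e1]
    rw [← Summable.tsum_finsetSum (fun n _ => (summable_term0 hα hα1 hw0 hw (N-n)).mul_left _)]
    apply tsum_congr
    intro j
    have : ∑ n ∈ Finset.range (N+1), Af α n * ((-w)^j * Bf (N-n) (α*j))
        = (-w)^j * ∑ n ∈ Finset.range (N+1), Af α n * Bf (N-n) (α*j) := by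
      rw [Finset.mul_sum]
      apply Finset.sum_congr rfl
      intro n _; ring
    rw [this, convV]
  have h2 : ∑' j : ℕ, (-w)^j * Bf N (α*j - α) = Bf N (-α) - w * Sf α w N := by
    have hsum : Summable (fun j : ℕ => (-w)^j * Bf N (α*j + (-α))) :=
      summable_term hα hα1 (by linarith) (by linarith) hw0 hw N
    have hsum' : Summable (fun j : ℕ => (-w)^j * Bf N (α*j - α)) := by
      apply hsum.congr; intro j; ring_nf
    rw [Summable.tsum_eq_zero_add hsum']
    have e0 : (-w)^(0:ℕ) * Bf N (α*(0:ℕ) - α) = Bf N (-α) := by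
      norm_num
    rw [e0]
    have e1 : ∀ j : ℕ, (-w)^(j+1) * Bf N (α*(j+1:ℕ) - α) = (-w) * ((-w)^j * Bf N (α*j)) := by
      intro j
      have : (α*((j+1:ℕ):ℝ) - α) = α * j := by push_cast; ring
      rw [this, pow_succ]
      ring
    rw [tsum_congr e1, tsum_mul_left]
    rw [Sf]
    ring
  have h3 : ∑ n ∈ Finset.range (N+1), Af α n * Sf α w (N-n)
      = ∑ i ∈ Finset.range N, Af α (i+1) * Sf α w (N-(i+1)) + Sf α w N := by
    rw [Finset.sum_range_succ' (fun n => Af α n * Sf α w (N-n)) N]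
    simp [Af_zero]
  rw [h3, h2] at h1
  linarith [h1]

lemma Sf_bounds {α w : ℝ} (hα : 0 < α) (hα1 : α ≤ 1) (hw0 : 0 < w) (hw : w < 1) :
    ∀ N, 0 ≤ Sf α w N ∧ Sf α w N ≤ 1 := by
  intro N
  induction N using Nat.strong_induction_on with
  | _ N ih =>
    have hrec := Sf_rec hα hα1 hw0 hw N
    have hBnn : 0 ≤ Bf N (-α) := Bf_nonneg (by linarith) N
    have hterm_lo : ∀ i ∈ Finset.range N, Af α (i+1) * Sf α w (N-(i+1)) ≤ 0 := by
      intro i hi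
      rw [Finset.mem_range] at hi
      have h1 := Af_succ_nonpos (le_of_lt hα) hα1 i
      have h2 := (ih (N-(i+1)) (by omega)).1
      exact mul_nonpos_of_nonpos_of_nonneg h1 h2
    have hterm_hi : ∀ i ∈ Finset.range N, -(Af α (i+1)) * Sf α w (N-(i+1)) ≤ -(Af α (i+1)) := by
      intro i hi
      rw [Finset.mem_range] at hi
      have h1 := Af_succ_nonpos (le_of_lt hα) hα1 i
      have h2 := (ih (N-(i+1)) (by omega)).2
      nlinarith
    have hAfsum : ∑ i ∈ Finset.range N, Af α (i+1) = Bf N (-α) - 1 := by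
      have := Af_sum α N
      rw [Finset.sum_range_succ' (fun n => Af α n) N, Af_zero] at this
      linarith
    constructor
    · have h4 : 0 ≤ (1+w) * Sf α w N := by
        rw [hrec]
        have := Finset.sum_nonpos hterm_lo
        linarith
      nlinarith
    · have h5 : (1+w) * Sf α w N ≤ 1 := by
        rw [hrec]
        have h6 : ∑ i ∈ Finset.range N, -(Af α (i+1)) * Sf α w (N-(i+1))
            ≤ ∑ i ∈ Finset.range N, -(Af α (i+1)) := Finset.sum_le_sum hterm_hi
        have h7 : ∑ i ∈ Finset.range N, -(Af α (i+1)) = 1 - Bf N (-α) := by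
          rw [Finset.sum_neg_distrib, hAfsum]
          ring
        have h8 : ∑ i ∈ Finset.range N, Af α (i+1) * Sf α w (N-(i+1))
            = - ∑ i ∈ Finset.range N, -(Af α (i+1)) * Sf α w (N-(i+1)) := by
          rw [← Finset.sum_neg_distrib]
          apply Finset.sum_congr rfl
          intro i _
          ring
        rw [h8]
        linarith
      nlinarith
lemma tendsto_Bf_div (s : ℝ) (hs : 0 ≤ s) :
    Tendsto (fun N : ℕ => Bf N s / (N:ℝ)^s) atTop (𝓝 (1 / Real.Gamma (s+1))) := by
  have hΓpos : 0 < Real.Gamma (s+1) := Real.Gamma_pos_of_pos (by linarith)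
  have h1 : Tendsto (fun N : ℕ => ((N:ℝ)/((N:ℝ)+(s+1))) / Real.GammaSeq (s+1) N) atTop
      (𝓝 (1 / Real.Gamma (s+1))) := by
    apply Tendsto.div (tendsto_natCast_div_add_atTop (s+1))
      (Real.GammaSeq_tendsto_Gamma (s+1)) (ne_of_gt hΓpos)
  apply h1.congr'
  filter_upwards [eventually_ge_atTop 1] with N hN
  have hN0 : (0:ℝ) < (N:ℝ) := by exact_mod_cast hN
  have hprod : ∏ j ∈ Finset.range (N+1), (s+1+(j:ℝ)) = P N (s+1) * (s+1+N) := by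
    rw [← P_succ]
    rfl
  have hPpos : 0 < P N (s+1) := P_pos (by linarith) N
  have hfac : (0:ℝ) < N ! := by positivity
  have hpow : (0:ℝ) < (N:ℝ)^s := Real.rpow_pos_of_pos hN0 s
  have hden : (0:ℝ) < s+1+(N:ℝ) := by linarith
  have hrpow1 : (N:ℝ)^(s+1) = (N:ℝ)^s * N := by
    rw [Real.rpow_add_one (ne_of_gt hN0)]
  rw [Real.GammaSeq, hprod, hrpow1]
  unfold Bf
  field_simp
  ring

lemma Bf_div_antitone_step (s : ℝ) (hs : 0 ≤ s) (N : ℕ) (hN : 1 ≤ N) :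
    Bf (N+1) s / ((N:ℝ)+1)^s ≤ Bf N s / (N:ℝ)^s := by
  have hN0 : (0:ℝ) < (N:ℝ) := by exact_mod_cast hN
  have hN1 : (0:ℝ) < (N:ℝ)+1 := by linarith
  have hpowN : (0:ℝ) < (N:ℝ)^s := Real.rpow_pos_of_pos hN0 s
  have hpowN1 : (0:ℝ) < ((N:ℝ)+1)^s := Real.rpow_pos_of_pos hN1 s
  -- key inequality : (s+1+N)/(N+1) ≤ (N+1)^s/N^s
  have hkey : (s+1+(N:ℝ))/((N:ℝ)+1) ≤ ((N:ℝ)+1)^s/(N:ℝ)^s := by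
    rw [← Real.div_rpow (by linarith) (le_of_lt hN0)]
    have hx : (0:ℝ) < ((N:ℝ)+1)/N := by positivity
    rw [Real.rpow_def_of_pos hx]
    have hlog : (1:ℝ)/((N:ℝ)+1) ≤ Real.log (((N:ℝ)+1)/N) := by
      have h0 := Real.one_sub_inv_le_log_of_pos hx
      have hinv : (((N:ℝ)+1)/N)⁻¹ = (N:ℝ)/((N:ℝ)+1) := by rw [inv_div]
      rw [hinv] at h0
      have h1 : 1 - (N:ℝ)/((N:ℝ)+1) = 1/((N:ℝ)+1) := by field_simp; ring
      linarith
    have hexp := Real.add_one_le_exp (Real.log (((N:ℝ)+1)/N) * s)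
    have h2 : (s+1+(N:ℝ))/((N:ℝ)+1) = 1 + s * (1/((N:ℝ)+1)) := by field_simp; ring
    rw [h2]
    have h3 : s * (1/((N:ℝ)+1)) ≤ s * Real.log (((N:ℝ)+1)/N) :=
      mul_le_mul_of_nonneg_left hlog hs
    nlinarith
  rw [div_le_div_iff₀ hN1 hpowN] at hkey
  -- now cross multiply the main goal
  have hPnn : 0 ≤ P N (s+1) := P_nonneg (by linarith) N
  have hfac : (0:ℝ) < N ! := by positivity
  have hBf1 : Bf (N+1) s = P N (s+1) * (s+1+(N:ℝ)) / (((N:ℝ)+1) * (N !)) := by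
    unfold Bf
    rw [P_succ, Nat.factorial_succ]
    push_cast
    ring_nf
  have hBf0 : Bf N s = P N (s+1) / (N !) := rfl
  rw [hBf1, hBf0, div_div, div_div, div_le_div_iff₀ (by positivity) (by positivity)]
  have h5 : 0 ≤ P N (s+1) * (N !) := by positivity
  calc P N (s+1) * (s+1+(N:ℝ)) * ((N !) * (N:ℝ)^s)
      = (P N (s+1) * (N !)) * ((s+1+(N:ℝ)) * (N:ℝ)^s) := by ring
    _ ≤ (P N (s+1) * (N !)) * (((N:ℝ)+1)^s * ((N:ℝ)+1)) := mul_le_mul_of_nonneg_left hkey h5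
    _ = P N (s+1) * (((N:ℝ)+1) * (N !) * ((N:ℝ)+1)^s) := by ring

lemma Bf_div_antitone (s : ℝ) (hs : 0 ≤ s) {M N : ℕ} (hM : 1 ≤ M) (hMN : M ≤ N) :
    Bf N s / (N:ℝ)^s ≤ Bf M s / (M:ℝ)^s := by
  induction N, hMN using Nat.le_induction with
  | base => exact le_refl _
  | succ N hMN ih =>
    have := Bf_div_antitone_step s hs N (le_trans hM hMN)
    push_cast at this ⊢
    linarith
lemma rpow_mul_natpow (M : ℕ) (α : ℝ) (j : ℕ) : ((M:ℝ)^α)^j = (M:ℝ)^(α*(j:ℝ)) := by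
  rw [Real.rpow_mul (by positivity), Real.rpow_natCast]

lemma tendsto_main {α x : ℝ} (hα : 0 < α) (hα1 : α ≤ 1) (hx : 0 < x) {M : ℕ}
    (hM1 : 1 ≤ M) (hMx : x < (M:ℝ)^α) :
    Tendsto (fun N : ℕ => ∑' j : ℕ, ((-x)^j * (Bf N (α*j) / (N:ℝ)^(α*(j:ℝ))))) atTop
      (𝓝 (∑' j : ℕ, (-x)^j / Real.Gamma (α*(j:ℝ)+1))) := by
  have hM0 : (0:ℝ) < (M:ℝ) := by exact_mod_cast hM1
  have hMpow : (0:ℝ) < (M:ℝ)^α := Real.rpow_pos_of_pos hM0 α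
  set w₀ : ℝ := x / (M:ℝ)^α with hw₀
  have hw0 : 0 < w₀ := by positivity
  have hw1 : w₀ < 1 := by
    rw [hw₀, div_lt_one hMpow]; exact hMx
  have hb_sum : Summable (fun j : ℕ => x^j * (Bf M (α*(j:ℝ)) / (M:ℝ)^(α*(j:ℝ)))) := by
    have h := (summable_term0 hα hα1 hw0 hw1 M).abs
    apply h.congr
    intro j
    have hj0 : (0:ℝ) ≤ α*(j:ℝ) := mul_nonneg hα.le (Nat.cast_nonneg j)
    have hBnn : 0 ≤ Bf M (α*(j:ℝ)) := Bf_nonneg (by linarith) M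
    rw [abs_mul, abs_pow, abs_neg, abs_of_pos hw0, abs_of_nonneg hBnn]
    rw [hw₀, div_pow, rpow_mul_natpow]
    field_simp
  apply tendsto_tsum_of_dominated_convergence hb_sum
  · intro j
    have h := (tendsto_Bf_div (α*(j:ℝ)) (by positivity)).const_mul ((-x)^j)
    simpa [mul_one_div, div_eq_mul_inv] using h
  · filter_upwards [eventually_ge_atTop M] with N hNM
    intro j
    have hN1 : 1 ≤ N := le_trans hM1 hNM
    have hN0 : (0:ℝ) < (N:ℝ) := by exact_mod_cast hN1
    have hj0 : (0:ℝ) ≤ α*(j:ℝ) := mul_nonneg hα.le (Nat.cast_nonneg j)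
    have hBnn : 0 ≤ Bf N (α*(j:ℝ)) := Bf_nonneg (by linarith) N
    have hpow : (0:ℝ) < (N:ℝ)^(α*(j:ℝ)) := Real.rpow_pos_of_pos hN0 _
    rw [norm_mul, norm_pow, norm_neg, Real.norm_eq_abs, Real.norm_eq_abs,
      abs_of_pos hx, abs_of_nonneg (by positivity : (0:ℝ) ≤ Bf N (α*(j:ℝ)) / (N:ℝ)^(α*(j:ℝ)))]
    apply mul_le_mul_of_nonneg_left _ (by positivity)
    exact Bf_div_antitone (α*(j:ℝ)) (by positivity) hM1 hNM

lemma ML_bounds_pos {α x : ℝ} (hα : 0 < α) (hα1 : α ≤ 1) (hx : 0 < x) :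
    0 ≤ ∑' j : ℕ, (-x)^j / Real.Gamma (α*(j:ℝ)+1)
      ∧ ∑' j : ℕ, (-x)^j / Real.Gamma (α*(j:ℝ)+1) ≤ 1 := by
  have hinf : Tendsto (fun N : ℕ => ((N:ℝ))^α) atTop atTop :=
    (tendsto_rpow_atTop hα).comp tendsto_natCast_atTop_atTop
  obtain ⟨M, hM⟩ := ((hinf.eventually_gt_atTop x).and (eventually_ge_atTop 1)).exists
  obtain ⟨hMx, hM1⟩ := hM
  have htd := tendsto_main hα hα1 hx hM1 hMx
  have hev : ∀ᶠ N in atTop,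
      0 ≤ (∑' j : ℕ, ((-x)^j * (Bf N (α*(j:ℝ)) / (N:ℝ)^(α*(j:ℝ)))))
      ∧ (∑' j : ℕ, ((-x)^j * (Bf N (α*(j:ℝ)) / (N:ℝ)^(α*(j:ℝ))))) ≤ 1 := by
    filter_upwards [hinf.eventually_gt_atTop x, eventually_ge_atTop 1] with N hNx hN1
    have hN0 : (0:ℝ) < (N:ℝ) := by exact_mod_cast hN1
    have hNpow : (0:ℝ) < (N:ℝ)^α := Real.rpow_pos_of_pos hN0 α
    set wN : ℝ := x / (N:ℝ)^α with hwN
    have hw0 : 0 < wN := by positivity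
    have hw1 : wN < 1 := by rw [hwN, div_lt_one hNpow]; exact hNx
    have heq : (∑' j : ℕ, ((-x)^j * (Bf N (α*(j:ℝ)) / (N:ℝ)^(α*(j:ℝ))))) = Sf α wN N := by
      rw [Sf]
      apply tsum_congr
      intro j
      rw [hwN, show -(x / (N:ℝ)^α) = (-x) / (N:ℝ)^α from (neg_div _ _).symm,
        div_pow, rpow_mul_natpow]
      have hpow : (0:ℝ) < (N:ℝ)^(α*(j:ℝ)) := Real.rpow_pos_of_pos hN0 _
      field_simp
    rw [heq]
    exact Sf_bounds hα hα1 hw0 hw1 N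
  constructor
  · exact ge_of_tendsto htd (hev.mono (fun N h => h.1))
  · exact le_of_tendsto htd (hev.mono (fun N h => h.2))
end MLAux

noncomputable def mittagLefflerReal (α β x : ℝ) : ℝ :=
  ∑' n : ℕ, x ^ n / Real.Gamma (α * n + β)

theorem mittagLeffler_bounds (α : ℝ) (hα : 0 < α) (hα1 : α ≤ 1) :
    (∀ x : ℝ, 0 ≤ x → 0 ≤ mittagLefflerReal α 1 (-x) ∧ mittagLefflerReal α 1 (-x) ≤ 1) ∧
      mittagLefflerReal α 1 (-0) = 1 := by
  have hzero : mittagLefflerReal α 1 (-0) = 1 := by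
    rw [neg_zero, mittagLefflerReal]
    rw [tsum_eq_single 0 ?_]
    · norm_num [Real.Gamma_one]
    · intro n hn
      rw [zero_pow hn, zero_div]
  refine ⟨?_, hzero⟩
  intro x hx
  rcases eq_or_lt_of_le hx with h0 | hpos
  · rw [← h0]
    rw [show ((0:ℝ) = -0) from (neg_zero).symm] at hzero ⊢
    rw [hzero]
    norm_num
  · have h := MLAux.ML_bounds_pos hα hα1 hpos
    unfold mittagLefflerReal
    exact h
end
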